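/- arXiv:2408.05433 — 5 statements merged into one kernel-verified Lean document; each statement's English description precedes it below -/
import Mathlib

section
/- Let H be an infinite-dimensional separable complex Hilbert space and T a bounded linear operator on H. Then T is consistent in invertibility (i.e., for every bounded operator S on H, ST is invertible if and only if TS is invertible) if and only if exactly one of the following holds: (1) T is invertible; (2) the range of T is not closed; (3) the kernel of T is nonzero and the range of T is closed and proper. -/
open Set Filter Cardinal

noncomputable section

namespace UWE

universe u

variable {H K : Type u} [NormedAddCommGroup H] [InnerProductSpace ℂ H] [CompleteSpace H]
  [NormedAddCommGroup K] [InnerProductSpace ℂ K] [CompleteSpace K]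

/-- dimension of the kernel -/
def nn (T : H →L[ℂ] K) : Cardinal := Module.rank ℂ (LinearMap.ker (T : H →ₗ[ℂ] K))

/-- codimension of the range -/
def dd (T : H →L[ℂ] K) : Cardinal := Module.rank ℂ (K ⧸ LinearMap.range (T : H →ₗ[ℂ] K))

/-- bounded below -/
def BddBelowOp (T : H →L[ℂ] K) : Prop := ∃ c > 0, ∀ x, c * ‖x‖ ≤ ‖T x‖

/-- upper semi-Fredholm -/
def USF (T : H →L[ℂ] K) : Prop :=
  IsClosed (LinearMap.range (T : H →ₗ[ℂ] K) : Set K) ∧ nn T < Cardinal.aleph0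

/-- lower semi-Fredholm -/
def LSF (T : H →L[ℂ] K) : Prop := dd T < Cardinal.aleph0

def Fredholm (T : H →L[ℂ] K) : Prop := USF T ∧ LSF T

def FiniteAscent (T : H →L[ℂ] H) : Prop :=
  ∃ n : ℕ, LinearMap.ker ((T ^ n : H →L[ℂ] H) : H →ₗ[ℂ] H) = LinearMap.ker ((T ^ (n + 1) : H →L[ℂ] H) : H →ₗ[ℂ] H)

def FiniteDescent (T : H →L[ℂ] H) : Prop :=
  ∃ n : ℕ, LinearMap.range ((T ^ n : H →L[ℂ] H) : H →ₗ[ℂ] H) = LinearMap.range ((T ^ (n + 1) : H →L[ℂ] H) : H →ₗ[ℂ] H)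

def Browder (T : H →L[ℂ] H) : Prop := Fredholm T ∧ FiniteAscent T ∧ FiniteDescent T

/-- `T - λI` -/
def opl (T : H →L[ℂ] H) (z : ℂ) : H →L[ℂ] H := T - z • 1

/-- consistent in invertibility -/
def CI (T : H →L[ℂ] H) : Prop := ∀ S : H →L[ℂ] H, IsUnit (S * T) ↔ IsUnit (T * S)

/-- Kato (semi-regular) -/
def Kato (T : H →L[ℂ] H) : Prop :=
  IsClosed (LinearMap.range (T : H →ₗ[ℂ] H) : Set H) ∧
    ∀ n : ℕ, (LinearMap.ker (T : H →ₗ[ℂ] H) : Set H) ⊆ (LinearMap.range ((T ^ (n + 1) : H →L[ℂ] H) : H →ₗ[ℂ] H) : Set H)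

def specA (T : H →L[ℂ] H) : Set ℂ := {z | ¬ BddBelowOp (opl T z)}
def specEA (T : H →L[ℂ] H) : Set ℂ := {z | ¬ USF (opl T z) ∨ dd (opl T z) < nn (opl T z)}
def specP (T : H →L[ℂ] H) : Set ℂ := {z | LinearMap.ker (opl T z : H →ₗ[ℂ] H) ≠ ⊥}
def specB (T : H →L[ℂ] H) : Set ℂ := {z | ¬ Browder (opl T z)}
def specG (T : H →L[ℂ] H) : Set ℂ := {z | ¬ IsClosed (LinearMap.range (opl T z : H →ₗ[ℂ] H) : Set H)}
def specSFplus (T : H →L[ℂ] H) : Set ℂ := {z | ¬ USF (opl T z)}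
def specSFminus (T : H →L[ℂ] H) : Set ℂ := {z | ¬ LSF (opl T z)}
def specSF (T : H →L[ℂ] H) : Set ℂ := specSFplus T ∩ specSFminus T
def specCI (T : H →L[ℂ] H) : Set ℂ := {z | ¬ CI (opl T z)}

/-- accumulation points of a set -/
def accS (s : Set ℂ) : Set ℂ := {z | AccPt z (𝓟 s)}
/-- isolated points of a set -/
def isoS (s : Set ℂ) : Set ℂ := s \ accS s

/-- isolated eigenvalues of the spectrum -/
def E (T : H →L[ℂ] H) : Set ℂ := isoS (spectrum ℂ T) ∩ specP T

/-- property (UW_E) -/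
def UWEprop (T : H →L[ℂ] H) : Prop := specA T \ specEA T = E T

end UWE

/-! In a Hilbert space every closed subspace is complemented, so a bounded operator has a bounded
left inverse iff it is injective with closed range, and a bounded right inverse iff it is
surjective. If `S * T` is invertible then `T` has a left inverse, and if `T * S` is invertible it
has a right inverse. Hence `T` fails to be consistent in invertibility exactly when it has a
one-sided inverse without being invertible: a left inverse `S` gives `S * T = 1` while `T * S`
is not invertible, and symmetrically. -/

open Function

namespace ContinuousLinearMap

variable {𝕜 E F : Type*} [RCLike 𝕜] [NormedAddCommGroup E] [NormedAddCommGroup F]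

lemma HasLeftInverse.of_injective_of_isClosed_range [NormedSpace 𝕜 E] [CompleteSpace E]
    [InnerProductSpace 𝕜 F] [CompleteSpace F] {T : E →L[𝕜] F}
    (hinj : Injective T) (hcl : IsClosed (Set.range T)) : T.HasLeftInverse := by
  refine .of_injective_of_isClosed_range_of_closedComplement_range hinj hcl ?_
  have : IsClosed (T.range : Set F) := hcl
  have : CompleteSpace T.range := this.completeSpace_coe
  exact .of_isCompl_isClosed T.range.isCompl_orthogonal hcl T.range.isClosed_orthogonal

lemma HasRightInverse.of_surjective [InnerProductSpace 𝕜 E] [CompleteSpace E]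
    [NormedSpace 𝕜 F] [CompleteSpace F] {T : E →L[𝕜] F} (hsurj : Surjective T) :
    T.HasRightInverse := by
  have : CompleteSpace T.ker := T.isClosed_ker.completeSpace_coe
  let e := T.equivProdOfSurjectiveOfIsCompl T.ker.orthogonalProjectionOnto
    (LinearMap.range_eq_top.mpr hsurj)
    (LinearMap.range_eq_top.mpr fun v =>
      ⟨v, Submodule.orthogonalProjectionOnto_mem_subspace_eq_self v⟩)
    (by rw [Submodule.ker_orthogonalProjectionOnto]; exact Submodule.isCompl_orthogonal _)
  refine ⟨(e.symm : F × T.ker →L[𝕜] E) ∘L inl 𝕜 F T.ker, fun y => ?_⟩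
  exact congrArg Prod.fst (e.apply_symm_apply (y, 0))

variable {R M : Type*} [Semiring R] [TopologicalSpace M] [AddCommMonoid M] [Module R M]

lemma HasLeftInverse.of_isUnit_mul {S T : M →L[R] M} (h : IsUnit (S * T)) :
    T.HasLeftInverse := by
  obtain ⟨u, hu⟩ := h
  refine ⟨↑u⁻¹ * S, fun x => ?_⟩
  show (↑u⁻¹ * (S * T)) x = x
  rw [← hu, u.inv_mul]; rfl

lemma HasRightInverse.of_isUnit_mul {S T : M →L[R] M} (h : IsUnit (T * S)) :
    T.HasRightInverse := by
  obtain ⟨u, hu⟩ := h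
  refine ⟨S * ↑u⁻¹, fun x => ?_⟩
  show (T * S * ↑u⁻¹) x = x
  rw [← hu, u.mul_inv]; rfl

lemma HasLeftInverse.exists_isUnit_mul {T : M →L[R] M} (h : T.HasLeftInverse) :
    ∃ S : M →L[R] M, IsUnit (S * T) := by
  obtain ⟨S, hS⟩ := h
  exact ⟨S, (ext hS : S * T = 1) ▸ isUnit_one⟩

lemma HasRightInverse.exists_isUnit_mul {T : M →L[R] M} (h : T.HasRightInverse) :
    ∃ S : M →L[R] M, IsUnit (T * S) := by
  obtain ⟨S, hS⟩ := h
  exact ⟨S, (ext hS : T * S = 1) ▸ isUnit_one⟩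

end ContinuousLinearMap

namespace UWE

open ContinuousLinearMap

universe u

variable {H : Type u} [NormedAddCommGroup H] [InnerProductSpace ℂ H] [CompleteSpace H]

section

variable {T : H →L[ℂ] H}

omit [CompleteSpace H] in
lemma ci_of_isUnit (hT : IsUnit T) : CI T := by
  obtain ⟨u, rfl⟩ := hT
  intro S
  rw [Units.isUnit_mul_units, Units.isUnit_units_mul]

omit [CompleteSpace H] in
lemma ci_of_not_hasLeftInverse_of_not_hasRightInverse (hl : ¬ T.HasLeftInverse)
    (hr : ¬ T.HasRightInverse) : CI T := fun _ =>
  iff_of_false (fun h => hl (.of_isUnit_mul h)) (fun h => hr (.of_isUnit_mul h))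

lemma CI.isUnit_of_hasLeftInverse (hT : CI T) (hl : T.HasLeftInverse) : IsUnit T := by
  obtain ⟨S, hS⟩ := hl.exists_isUnit_mul
  exact T.isUnit_iff_bijective.mpr
    ⟨hl.injective, (HasRightInverse.of_isUnit_mul ((hT S).mp hS)).surjective⟩

lemma CI.isUnit_of_hasRightInverse (hT : CI T) (hr : T.HasRightInverse) : IsUnit T := by
  obtain ⟨S, hS⟩ := hr.exists_isUnit_mul
  exact T.isUnit_iff_bijective.mpr
    ⟨(HasLeftInverse.of_isUnit_mul ((hT S).mpr hS)).injective, hr.surjective⟩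

end

theorem CI_characterization_general
    (T : H →L[ℂ] H) :
    CI T ↔
      (IsUnit T ∨
        ¬ IsClosed (LinearMap.range (T : H →ₗ[ℂ] H) : Set H) ∨
        (LinearMap.ker (T : H →ₗ[ℂ] H) ≠ ⊥ ∧ IsClosed (LinearMap.range (T : H →ₗ[ℂ] H) : Set H) ∧
          LinearMap.range (T : H →ₗ[ℂ] H) ≠ ⊤)) := by
  rw [LinearMap.coe_range, Ne, Ne, LinearMap.ker_eq_bot, LinearMap.range_eq_top, coe_coe]
  constructor
  · intro hT
    by_cases hU : IsUnit T
    · exact .inl hU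
    by_cases hcl : IsClosed (range T)
    · refine .inr <| .inr ⟨fun hinj => hU ?_, hcl, fun hsurj => hU ?_⟩
      · exact hT.isUnit_of_hasLeftInverse (.of_injective_of_isClosed_range hinj hcl)
      · exact hT.isUnit_of_hasRightInverse (.of_surjective hsurj)
    · exact .inr <| .inl hcl
  · rintro (hU | hncl | ⟨hninj, -, hnsurj⟩)
    · exact ci_of_isUnit hU
    · exact ci_of_not_hasLeftInverse_of_not_hasRightInverse (fun hl => hncl hl.isClosed_range)
        fun hr => hncl (hr.surjective.range_eq ▸ isClosed_univ)
    · exact ci_of_not_hasLeftInverse_of_not_hasRightInverse (fun hl => hninj hl.injective)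
        fun hr => hnsurj hr.surjective

theorem CI_characterization
    (hinf : ¬ FiniteDimensional ℂ H) [TopologicalSpace.SeparableSpace H]
    (T : H →L[ℂ] H) :
    CI T ↔
      (IsUnit T ∨
        ¬ IsClosed (LinearMap.range (T : H →ₗ[ℂ] H) : Set H) ∨
        (LinearMap.ker (T : H →ₗ[ℂ] H) ≠ ⊥ ∧ IsClosed (LinearMap.range (T : H →ₗ[ℂ] H) : Set H) ∧
          LinearMap.range (T : H →ₗ[ℂ] H) ≠ ⊤)) :=
  CI_characterization_general T

end UWE
end
end

section
/- Let T be a bounded operator on a complex Hilbert space H. Then a complex number λ belongs to the CI spectrum of T (the set of λ such that T − λI is not consistent in invertibility) if and only if T − λI is either bounded below but not invertible, or surjective but not invertible. -/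
open Set Filter Cardinal

noncomputable section

namespace UWE

universe u

variable {H K : Type u} [NormedAddCommGroup H] [InnerProductSpace ℂ H] [CompleteSpace H]
  [NormedAddCommGroup K] [InnerProductSpace ℂ K] [CompleteSpace K]

/-! In a monoid, if `r * s` and `s * r` differ in invertibility then `s` is not a unit but has a
one-sided inverse; conversely, a one-sided inverse `r` of a non-unit `s` is such a witness, since
`s * r` (resp. `r * s`) invertible would give `s` an inverse on the other side as well. For
operators on a Hilbert space, a bounded left inverse exists exactly when the operator is bounded
below and a bounded right inverse exactly when it is surjective: the closed range, resp. kernel,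
has a closed (orthogonal) complement. -/

theorem not_forall_isUnit_mul_iff_swap {M : Type*} [Monoid M] {s : M} :
    (¬∀ r, IsUnit (r * s) ↔ IsUnit (s * r)) ↔
      ¬IsUnit s ∧ ((∃ l, l * s = 1) ∨ ∃ r, s * r = 1) := by
  have has_left_inv {r : M} (h : IsUnit (r * s)) : ∃ l, l * s = 1 := by
    obtain ⟨b, hb⟩ := h.exists_left_inv
    exact ⟨b * r, by rwa [mul_assoc]⟩
  have has_right_inv {r : M} (h : IsUnit (s * r)) : ∃ r', s * r' = 1 := by
    obtain ⟨b, hb⟩ := h.exists_right_inv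
    exact ⟨r * b, by rwa [← mul_assoc]⟩
  rw [not_forall]
  constructor
  · rintro ⟨r, hr⟩
    refine ⟨?_, ?_⟩
    · rintro ⟨u, rfl⟩
      exact hr ((Units.isUnit_mul_units r u).trans (Units.isUnit_units_mul u r).symm)
    · by_cases h : IsUnit (r * s)
      · exact .inl (has_left_inv h)
      · exact .inr (has_right_inv (r := r) (by tauto))
  · rintro ⟨hs, ⟨l, hl⟩ | ⟨r, hr⟩⟩
    · refine ⟨l, fun h => hs (isUnit_iff_exists_and_exists.2 ⟨?_, l, hl⟩)⟩
      exact has_right_inv (h.1 (hl ▸ isUnit_one))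
    · refine ⟨r, fun h => hs (isUnit_iff_exists_and_exists.2 ⟨⟨r, hr⟩, ?_⟩)⟩
      exact has_left_inv (h.2 (hr ▸ isUnit_one))

section Endomorphism

variable {R E : Type*} [Semiring R] [TopologicalSpace E] [AddCommMonoid E] [Module R E]

theorem _root_.ContinuousLinearMap.hasLeftInverse_iff_exists_mul_eq_one (f : E →L[R] E) :
    f.HasLeftInverse ↔ ∃ g, g * f = 1 :=
  exists_congr fun g => by simp [ContinuousLinearMap.ext_iff, Function.LeftInverse]

theorem _root_.ContinuousLinearMap.hasRightInverse_iff_exists_mul_eq_one (f : E →L[R] E) :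
    f.HasRightInverse ↔ ∃ g, f * g = 1 :=
  exists_congr fun g => by
    simp [ContinuousLinearMap.ext_iff, Function.RightInverse, Function.LeftInverse]

end Endomorphism

theorem _root_.Submodule.closedComplemented_of_isClosed {𝕜 E : Type*} [RCLike 𝕜]
    [NormedAddCommGroup E] [InnerProductSpace 𝕜 E] [CompleteSpace E] {p : Submodule 𝕜 E}
    (hp : IsClosed (p : Set E)) : p.ClosedComplemented :=
  haveI : CompleteSpace p := hp.completeSpace_coe
  p.isTopCompl_orthogonal.closedComplemented

theorem _root_.ContinuousLinearMap.HasLeftInverse.of_antilipschitz {𝕜 E F : Type*} [RCLike 𝕜]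
    [NormedAddCommGroup E] [NormedSpace 𝕜 E] [CompleteSpace E]
    [NormedAddCommGroup F] [InnerProductSpace 𝕜 F] [CompleteSpace F]
    {f : E →L[𝕜] F} {c : NNReal} (hf : AntilipschitzWith c f) : f.HasLeftInverse :=
  have hrange : IsClosed (range f) := hf.isClosed_range f.uniformContinuous
  .of_injective_of_isClosed_range_of_closedComplement_range hf.injective hrange
    (Submodule.closedComplemented_of_isClosed (by rwa [LinearMap.coe_range]))

theorem _root_.ContinuousLinearMap.HasRightInverse.of_surjective_of_closedComplemented_ker
    {𝕜 E F : Type*} [NontriviallyNormedField 𝕜]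
    [NormedAddCommGroup E] [NormedSpace 𝕜 E] [CompleteSpace E]
    [NormedAddCommGroup F] [NormedSpace 𝕜 F] [CompleteSpace F]
    {f : E →L[𝕜] F} (hf : Function.Surjective f) (hker : f.ker.ClosedComplemented) :
    f.HasRightInverse := by
  obtain ⟨P, hP⟩ := hker
  let e := f.equivProdOfSurjectiveOfIsCompl P (LinearMap.range_eq_top.2 hf)
    (LinearMap.range_eq_top.2 fun x => ⟨x, hP x⟩)
    (ContinuousLinearMap.isTopCompl_of_proj hP).isCompl
  exact ⟨(e.symm : F × f.ker →L[𝕜] E).comp (.inl 𝕜 F f.ker),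
    fun y => congrArg Prod.fst (e.apply_symm_apply (y, 0))⟩

theorem _root_.ContinuousLinearMap.hasRightInverse_iff_surjective {𝕜 E F : Type*} [RCLike 𝕜]
    [NormedAddCommGroup E] [InnerProductSpace 𝕜 E] [CompleteSpace E]
    [NormedAddCommGroup F] [NormedSpace 𝕜 F] [CompleteSpace F] (f : E →L[𝕜] F) :
    f.HasRightInverse ↔ Function.Surjective f :=
  ⟨fun h => h.surjective, fun hf => .of_surjective_of_closedComplemented_ker hf
    (Submodule.closedComplemented_of_isClosed f.isClosed_ker)⟩

theorem bddBelowOp_iff_hasLeftInverse (T : H →L[ℂ] K) : BddBelowOp T ↔ T.HasLeftInverse := by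
  constructor
  · rintro ⟨c, hc, hT⟩
    have hT' : AntilipschitzWith ⟨c⁻¹, (inv_pos.2 hc).le⟩ T :=
      T.antilipschitz_of_bound fun x => (le_inv_mul_iff₀ hc).2 (hT x)
    exact .of_antilipschitz hT'
  · rintro ⟨g, hg⟩
    have hT : AntilipschitzWith ‖g‖₊ T := g.lipschitz.to_rightInverse hg
    refine ⟨(‖g‖ + 1)⁻¹, by positivity, fun x => ?_⟩
    rw [inv_mul_le_iff₀ (by positivity)]
    calc ‖x‖ ≤ ‖g‖ * ‖T x‖ := T.bound_of_antilipschitz hT x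
      _ ≤ (‖g‖ + 1) * ‖T x‖ := by gcongr; linarith

theorem mem_specCI_iff (T : H →L[ℂ] H) (z : ℂ) :
    z ∈ specCI T ↔
      ((BddBelowOp (opl T z) ∧ ¬ IsUnit (opl T z)) ∨
        (Function.Surjective (opl T z) ∧ ¬ IsUnit (opl T z))) := by
  change ¬CI (opl T z) ↔ _
  rw [CI, not_forall_isUnit_mul_iff_swap,
    ← ContinuousLinearMap.hasLeftInverse_iff_exists_mul_eq_one, ← bddBelowOp_iff_hasLeftInverse,
    ← ContinuousLinearMap.hasRightInverse_iff_exists_mul_eq_one,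
    ContinuousLinearMap.hasRightInverse_iff_surjective]
  tauto

end UWE
end
end

section
/- For any bounded operator T on a complex Hilbert space, the CI spectrum σ_CI(T) is an open subset of ℂ. -/
/-! An operator fails to be CI exactly when it is one-sided but not two-sided invertible.
In a Banach algebra the left invertible elements form an open set, and the units are relatively
closed in it: if `b * a = 1` and `a` is a limit of units, then `b * x` is a unit for some unit `x`
near `a`, so `b` and hence `a` are units. The same holds on the right, so the elements that are not
CI form an open set, and `σ_CI(T)` is its preimage under the continuous map `λ ↦ T - λ • 1`. -/

open Set Filter Cardinal

noncomputable section

namespace UWE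

universe u

variable {H K : Type u} [NormedAddCommGroup H] [InnerProductSpace ℂ H] [CompleteSpace H]
  [NormedAddCommGroup K] [InnerProductSpace ℂ K] [CompleteSpace K]

section Monoid

variable {M : Type*} [Monoid M] {a b : M}

theorem isUnit_of_mul_eq_one_of_isUnit_mul (hba : b * a = 1) (h : IsUnit (a * b)) : IsUnit a := by
  obtain ⟨u, hu⟩ := h
  have hb : b = b * ↑u⁻¹ := left_inv_eq_right_inv hba (by rw [← mul_assoc, ← hu, u.mul_inv])
  exact isUnit_iff_exists.mpr ⟨b, by rw [hb, ← mul_assoc, ← hu, u.mul_inv], hba⟩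

theorem isUnit_of_mul_eq_one_of_isUnit_mul' (hab : a * b = 1) (h : IsUnit (b * a)) : IsUnit a := by
  have hb : IsUnit b := isUnit_of_mul_eq_one_of_isUnit_mul hab h
  exact (Units.isUnit_mul_units a hb.unit).mp (by rw [IsUnit.unit_spec, hab]; exact isUnit_one)

theorem not_forall_isUnit_mul_iff :
    (¬ ∀ S : M, IsUnit (S * a) ↔ IsUnit (a * S)) ↔
      ¬ IsUnit a ∧ ((∃ b, b * a = 1) ∨ ∃ b, a * b = 1) := by
  constructor
  · intro h
    refine ⟨fun ha => h fun S => ?_, ?_⟩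
    · rw [← ha.unit_spec, Units.isUnit_mul_units, Units.isUnit_units_mul]
    · push Not at h
      obtain ⟨S, ⟨⟨u, hu⟩, -⟩ | ⟨-, ⟨u, hu⟩⟩⟩ := h
      · exact .inl ⟨↑u⁻¹ * S, by rw [mul_assoc, ← hu, u.inv_mul]⟩
      · exact .inr ⟨S * ↑u⁻¹, by rw [← mul_assoc, ← hu, u.mul_inv]⟩
  · rintro ⟨ha, ⟨b, hba⟩ | ⟨b, hab⟩⟩ h
    · exact ha (isUnit_of_mul_eq_one_of_isUnit_mul hba ((h b).mp (hba ▸ isUnit_one)))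
    · exact ha (isUnit_of_mul_eq_one_of_isUnit_mul' hab ((h b).mpr (hab ▸ isUnit_one)))

end Monoid

section Topological

variable {M : Type*} [Monoid M] [TopologicalSpace M] [ContinuousMul M]

theorem isOpen_setOf_exists_mul_eq_one (hU : IsOpen {x : M | IsUnit x}) :
    IsOpen {a : M | ∃ b, b * a = 1} := by
  refine isOpen_iff_mem_nhds.mpr fun a ⟨b, hba⟩ => ?_
  have hnhds : (b * ·) ⁻¹' {x | IsUnit x} ∈ nhds a :=
    (continuous_const.mul continuous_id).continuousAt.preimage_mem_nhds
      (hU.mem_nhds (by simp [hba]))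
  refine Filter.mem_of_superset hnhds fun x ⟨u, hu⟩ => ?_
  exact ⟨↑u⁻¹ * b, by rw [mul_assoc]; simp [← hu]⟩

theorem isUnit_of_mul_eq_one_of_mem_closure (hU : IsOpen {x : M | IsUnit x}) {a b : M}
    (hba : b * a = 1) (ha : a ∈ closure {x : M | IsUnit x}) : IsUnit a := by
  have hopen : IsOpen ((b * ·) ⁻¹' {x | IsUnit x}) :=
    hU.preimage (continuous_const.mul continuous_id)
  obtain ⟨x, hbx, hx⟩ := mem_closure_iff.mp ha _ hopen (hba ▸ isUnit_one : IsUnit (b * a))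
  have hb : IsUnit b := (Units.isUnit_mul_units b hx.unit).mp hbx
  exact (Units.isUnit_units_mul hb.unit a).mp (by rw [IsUnit.unit_spec, hba]; exact isUnit_one)

theorem isOpen_setOf_not_isUnit_and_exists_mul_eq_one (hU : IsOpen {x : M | IsUnit x}) :
    IsOpen {a : M | ¬ IsUnit a ∧ ∃ b, b * a = 1} := by
  convert isClosed_closure.isOpen_compl.inter (isOpen_setOf_exists_mul_eq_one hU) using 1
  ext a
  refine and_congr_left fun ⟨b, hba⟩ =>
    ⟨fun ha hcl => ha (isUnit_of_mul_eq_one_of_mem_closure hU hba hcl),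
      fun hcl ha => hcl (subset_closure ha)⟩

theorem isOpen_setOf_not_isUnit_and_exists_mul_eq_one' (hU : IsOpen {x : M | IsUnit x}) :
    IsOpen {a : M | ¬ IsUnit a ∧ ∃ b, a * b = 1} := by
  have hUop : IsOpen {x : Mᵐᵒᵖ | IsUnit x} := by
    convert hU.preimage MulOpposite.continuous_unop using 1
    ext x
    exact isUnit_unop.symm
  convert (isOpen_setOf_not_isUnit_and_exists_mul_eq_one hUop).preimage
    MulOpposite.continuous_op using 1
  ext a
  simp only [mem_ofPred_eq, mem_preimage, isUnit_op, MulOpposite.op_surjective.exists,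
    ← MulOpposite.op_mul, MulOpposite.op_eq_one_iff]

theorem isOpen_setOf_not_forall_isUnit_mul_iff (hU : IsOpen {x : M | IsUnit x}) :
    IsOpen {a : M | ¬ ∀ S : M, IsUnit (S * a) ↔ IsUnit (a * S)} := by
  simp_rw [not_forall_isUnit_mul_iff, and_or_left, ofPred_or]
  exact (isOpen_setOf_not_isUnit_and_exists_mul_eq_one hU).union
    (isOpen_setOf_not_isUnit_and_exists_mul_eq_one' hU)

end Topological

theorem specCI_isOpen (T : H →L[ℂ] H) : IsOpen (specCI T) :=
  (isOpen_setOf_not_forall_isUnit_mul_iff Units.isOpen).preimage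
    (continuous_const.sub (continuous_id.smul continuous_const))

end UWE
end
end

section
/- Let H, K be Hilbert spaces, A ∈ B(H) upper semi-Fredholm with d(A) = ∞ where d denotes codimension of range, B ∈ B(K) with closed range, n(B) = ∞, and suppose n(A) < d(B) (both finite or d(B) infinite). Define C : K → H as T on ker(B) and 0 on ker(B)^⊥, where T : ker(B) → range(A)^⊥ is an invertible isometry (which exists since both spaces are infinite-dimensional). Then ker(M_C) = ker(A) ⊕ {0} and range(M_C) is closed, where M_C = [[A, C],[0, B]]. -/
/-!
Write `M_C (x, y) = (A x + C y, B y)`. On `ker B` the operator `C` is an isometry onto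
`(range A)ᗮ`, so for `y ∈ ker B` the sum `A x + C y` splits orthogonally and vanishes only when
`A x = 0` and `y = 0`. For the range, `H = range A ⊕ (range A)ᗮ` because `range A` is closed, and
`C` sends `ker B` onto the second summand while killing `(ker B)ᗮ`, on which `B` already attains
all of `range B`. Hence `range M_C = H ⊕ range B`, which is closed.
-/

open Set Filter Cardinal

noncomputable section

namespace UWE

universe u

variable {H K : Type u} [NormedAddCommGroup H] [InnerProductSpace ℂ H] [CompleteSpace H]
  [NormedAddCommGroup K] [InnerProductSpace ℂ K] [CompleteSpace K]

/-- the upper triangular operator matrix `[[A, C], [0, B]]` acting on `H ⊕ K` -/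
def MC (A : H →L[ℂ] H) (B : K →L[ℂ] K) (C : K →L[ℂ] H) :
    WithLp 2 (H × K) →L[ℂ] WithLp 2 (H × K) :=
  letI e := WithLp.prodContinuousLinearEquiv 2 ℂ H K
  (e.symm.toContinuousLinearMap.comp
    ((A.comp (ContinuousLinearMap.fst ℂ H K) + C.comp (ContinuousLinearMap.snd ℂ H K)).prod
      (B.comp (ContinuousLinearMap.snd ℂ H K)))).comp e.toContinuousLinearMap

section

universe v

variable {E F : Type v} [NormedAddCommGroup E] [InnerProductSpace ℂ E]
  [NormedAddCommGroup F] [InnerProductSpace ℂ F]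

theorem exists_mem_ker_orthogonal_apply_eq [CompleteSpace E] (T : E →L[ℂ] F) {w : F}
    (hw : w ∈ LinearMap.range (T : E →ₗ[ℂ] F)) :
    ∃ y ∈ (LinearMap.ker (T : E →ₗ[ℂ] F))ᗮ, T y = w := by
  obtain ⟨y₀, rfl⟩ := hw
  have : CompleteSpace (LinearMap.ker (T : E →ₗ[ℂ] F)) := T.isClosed_ker.completeSpace_coe
  obtain ⟨k, hk, y, hy, rfl⟩ := (LinearMap.ker (T : E →ₗ[ℂ] F)).exists_add_mem_mem_orthogonal y₀
  have hTk : T k = 0 := hk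
  exact ⟨y, hy, by simp [hTk]⟩

variable (A : E →L[ℂ] E) (B : F →L[ℂ] F) (C : F →L[ℂ] E)

local notation "e" => WithLp.prodContinuousLinearEquiv 2 ℂ E F

theorem prodContinuousLinearEquiv_MC_apply (v : WithLp 2 (E × F)) :
    e (MC A B C v) = (A (e v).1 + C (e v).2, B (e v).2) :=
  rfl

variable {A B C}

theorem mem_ker_MC_iff
    (hCorth : MapsTo C (LinearMap.ker (B : F →ₗ[ℂ] F)) (LinearMap.range (A : E →ₗ[ℂ] E))ᗮ)
    (hCinj : InjOn C (LinearMap.ker (B : F →ₗ[ℂ] F))) (v : WithLp 2 (E × F)) :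
    v ∈ LinearMap.ker (MC A B C : WithLp 2 (E × F) →ₗ[ℂ] WithLp 2 (E × F)) ↔
      (e v).1 ∈ LinearMap.ker (A : E →ₗ[ℂ] E) ∧ (e v).2 = 0 := by
  have hMC : MC A B C v = 0 ↔ A (e v).1 + C (e v).2 = 0 ∧ B (e v).2 = 0 := by
    rw [← (e).map_eq_zero_iff, prodContinuousLinearEquiv_MC_apply, Prod.mk_eq_zero]
  simp only [LinearMap.mem_ker, ContinuousLinearMap.coe_coe, hMC]
  constructor
  · rintro ⟨hsum, hy⟩
    obtain ⟨hx, hCy⟩ := Submodule.disjoint_iff_add_eq_zero.mp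
      (LinearMap.range (A : E →ₗ[ℂ] E)).orthogonal_disjoint
      (LinearMap.mem_range_self _ _) (hCorth hy) hsum
    exact ⟨hx, hCinj hy (Submodule.zero_mem _) (hCy.trans C.map_zero.symm)⟩
  · rintro ⟨hx, hy⟩
    exact ⟨by rw [hx, hy, map_zero, add_zero], by rw [hy, map_zero]⟩

theorem range_MC_eq [CompleteSpace E] [CompleteSpace F]
    (hA : IsClosed (LinearMap.range (A : E →ₗ[ℂ] E) : Set E))
    (hCsurj : ((LinearMap.range (A : E →ₗ[ℂ] E))ᗮ : Set E) ⊆ C '' LinearMap.ker (B : F →ₗ[ℂ] F))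
    (hCzero : ∀ y ∈ (LinearMap.ker (B : F →ₗ[ℂ] F))ᗮ, C y = 0) :
    (LinearMap.range (MC A B C : WithLp 2 (E × F) →ₗ[ℂ] WithLp 2 (E × F)) : Set (WithLp 2 (E × F))) =
      e ⁻¹' (Set.univ ×ˢ (LinearMap.range (B : F →ₗ[ℂ] F) : Set F)) := by
  have : CompleteSpace (LinearMap.range (A : E →ₗ[ℂ] E)) := hA.completeSpace_coe
  ext w
  constructor
  · rintro ⟨v, rfl⟩
    exact ⟨trivial, LinearMap.mem_range_self (B : F →ₗ[ℂ] F) (e v).2⟩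
  · rintro ⟨-, hw⟩
    obtain ⟨y₂, hy₂, hBy₂⟩ := exists_mem_ker_orthogonal_apply_eq B hw
    obtain ⟨-, ⟨x, rfl⟩, b, hb, hxb⟩ :=
      (LinearMap.range (A : E →ₗ[ℂ] E)).exists_add_mem_mem_orthogonal (e w).1
    obtain ⟨y₁, hy₁, rfl⟩ := hCsurj hb
    refine ⟨(e).symm (x, y₁ + y₂), (e).injective ?_⟩
    rw [ContinuousLinearMap.coe_coe, prodContinuousLinearEquiv_MC_apply,
      ContinuousLinearEquiv.apply_symm_apply]
    have hBy₁ : B y₁ = 0 := hy₁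
    simp only [map_add, hCzero y₂ hy₂, hBy₁, hBy₂, add_zero, zero_add]
    exact Prod.ext hxb.symm rfl

end

theorem kernel_and_closed_range_of_special_C_general
    (A : H →L[ℂ] H) (B : K →L[ℂ] K) (C : K →L[ℂ] H)
    (hUSF : USF A)
    (hBcl : IsClosed (LinearMap.range (B : K →ₗ[ℂ] K) : Set K))
    (Tiso : (LinearMap.ker (B : K →ₗ[ℂ] K)) ≃ₗᵢ[ℂ] ((LinearMap.range (A : H →ₗ[ℂ] H))ᗮ : Submodule ℂ H))
    (hC1 : ∀ y : LinearMap.ker (B : K →ₗ[ℂ] K), C (y : K) = (Tiso y : H))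
    (hC2 : ∀ y ∈ ((LinearMap.ker (B : K →ₗ[ℂ] K))ᗮ : Submodule ℂ K), C y = 0) :
    (∀ v : WithLp 2 (H × K),
      v ∈ LinearMap.ker (MC A B C : WithLp 2 (H × K) →ₗ[ℂ] WithLp 2 (H × K)) ↔
        ((WithLp.prodContinuousLinearEquiv 2 ℂ H K) v).1 ∈ LinearMap.ker (A : H →ₗ[ℂ] H) ∧
        ((WithLp.prodContinuousLinearEquiv 2 ℂ H K) v).2 = 0) ∧
      IsClosed (LinearMap.range (MC A B C : WithLp 2 (H × K) →ₗ[ℂ] WithLp 2 (H × K)) : Set (WithLp 2 (H × K))) := by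
  have hCorth : MapsTo C (LinearMap.ker (B : K →ₗ[ℂ] K)) (LinearMap.range (A : H →ₗ[ℂ] H))ᗮ :=
    fun y hy ↦ hC1 ⟨y, hy⟩ ▸ (Tiso ⟨y, hy⟩).2
  have hCinj : InjOn C (LinearMap.ker (B : K →ₗ[ℂ] K)) := fun y hy y' hy' h ↦
    congrArg Subtype.val <| Tiso.injective <| Subtype.ext <|
      (hC1 ⟨y, hy⟩).symm.trans (h.trans (hC1 ⟨y', hy'⟩))
  have hCsurj : ((LinearMap.range (A : H →ₗ[ℂ] H))ᗮ : Set H) ⊆ C '' LinearMap.ker (B : K →ₗ[ℂ] K) :=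
    fun b hb ↦ ⟨_, (Tiso.symm ⟨b, hb⟩).2, by simp [hC1]⟩
  refine ⟨mem_ker_MC_iff hCorth hCinj, ?_⟩
  rw [range_MC_eq hUSF.1 hCsurj hC2]
  exact (isClosed_univ.prod hBcl).preimage (WithLp.prodContinuousLinearEquiv 2 ℂ H K).continuous

theorem kernel_and_closed_range_of_special_C
    (A : H →L[ℂ] H) (B : K →L[ℂ] K) (C : K →L[ℂ] H)
    (hUSF : USF A) (hdA : Cardinal.aleph0 ≤ dd A)
    (hBcl : IsClosed (LinearMap.range (B : K →ₗ[ℂ] K) : Set K)) (hnB : Cardinal.aleph0 ≤ nn B)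
    (hnd : nn A < dd B)
    (Tiso : (LinearMap.ker (B : K →ₗ[ℂ] K)) ≃ₗᵢ[ℂ] ((LinearMap.range (A : H →ₗ[ℂ] H))ᗮ : Submodule ℂ H))
    (hC1 : ∀ y : LinearMap.ker (B : K →ₗ[ℂ] K), C (y : K) = (Tiso y : H))
    (hC2 : ∀ y ∈ ((LinearMap.ker (B : K →ₗ[ℂ] K))ᗮ : Submodule ℂ K), C y = 0) :
    (∀ v : WithLp 2 (H × K),
      v ∈ LinearMap.ker (MC A B C : WithLp 2 (H × K) →ₗ[ℂ] WithLp 2 (H × K)) ↔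
        ((WithLp.prodContinuousLinearEquiv 2 ℂ H K) v).1 ∈ LinearMap.ker (A : H →ₗ[ℂ] H) ∧
        ((WithLp.prodContinuousLinearEquiv 2 ℂ H K) v).2 = 0) ∧
      IsClosed (LinearMap.range (MC A B C : WithLp 2 (H × K) →ₗ[ℂ] WithLp 2 (H × K)) : Set (WithLp 2 (H × K))) :=
  kernel_and_closed_range_of_special_C_general A B C hUSF hBcl Tiso hC1 hC2

end UWE
end
end

section
/- Let A, B ∈ B(ℓ²) be defined by A(x₁, x₂, x₃, …) = (0, x₁, 0, x₂, 0, x₃, …) and B(x₁, x₂, x₃, …) = (x₂, x₄, x₆, …). Then for every λ with |λ| < 1, A − λI is upper semi-Fredholm with n(A − λI) = 0 and d(A − λI) = ∞, and n(B − λI) > 0; hence Ω(A; B) ⊇ {λ ∈ ℂ : |λ| < 1}. -/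
open Set Filter Cardinal

noncomputable section

namespace UWE

universe u

variable {H K : Type u} [NormedAddCommGroup H] [InnerProductSpace ℂ H] [CompleteSpace H]
  [NormedAddCommGroup K] [InnerProductSpace ℂ K] [CompleteSpace K]

local notation "ℓ2" => lp (fun _ : ℕ => ℂ) 2

/-- the `(A,B)` entanglement stable spectrum `Ω(A; B)` -/
def Omega (A : H →L[ℂ] H) (B : K →L[ℂ] K) : Set ℂ :=
  {z | USF (opl A z) ∧ Cardinal.aleph0 ≤ dd (opl A z) ∧ 0 < nn (opl A z) + nn (opl B z)}

/-!
Write `A*` for the adjoint. The hypotheses say that `B = A*` and `B A = 1`, so `A` is an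
isometry. For `|λ| < 1` this makes `A - λ` bounded below by `1 - |λ|`: it is injective with
closed range. Since `B - μ = B (1 - μ A)` and `1 - μ A` is invertible for `|μ| < 1`,
`ker (B - μ)` is isomorphic to `ker B`, which contains every even-indexed unit vector and so is
infinite dimensional. Finally `ker (B - conj λ) = (range (A - λ))ᗮ` meets `range (A - λ)` only
in `0`, so it injects into the cokernel of `A - λ`, and `d(A - λ) = ∞`.
-/

open ContinuousLinearMap

lemma rank_le_rank_quotient_of_disjoint {R M : Type*} [Ring R] [AddCommGroup M] [Module R M]
    {p q : Submodule R M} (h : Disjoint q p) : Module.rank R q ≤ Module.rank R (M ⧸ p) := by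
  refine LinearMap.rank_le_of_injective (p.mkQ ∘ₗ q.subtype) ?_
  rw [← LinearMap.ker_eq_bot, LinearMap.ker_comp, Submodule.ker_mkQ,
    ← Submodule.disjoint_iff_comap_eq_bot]
  exact h

section Hilbert

variable {E : Type*} [NormedAddCommGroup E] [InnerProductSpace ℂ E]

lemma adjoint_opl [CompleteSpace E] (T : E →L[ℂ] E) (z : ℂ) :
    adjoint (opl T z) = opl (adjoint T) (starRingEnd ℂ z) := by
  simp [opl, ← star_eq_adjoint]

lemma antilipschitz_opl_of_isometry {T : E →L[ℂ] E} (hT : ∀ x, ‖T x‖ = ‖x‖) {z : ℂ}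
    (hz : ‖z‖ < 1) : AntilipschitzWith (1 - ‖z‖)⁻¹.toNNReal (opl T z) := by
  have hc : 0 < 1 - ‖z‖ := by linarith
  refine (opl T z).antilipschitz_of_bound fun x => ?_
  rw [Real.coe_toNNReal _ (by positivity), inv_mul_eq_div, le_div_iff₀' hc]
  calc (1 - ‖z‖) * ‖x‖ = ‖T x‖ - ‖z • x‖ := by rw [hT, norm_smul]; ring
    _ ≤ ‖T x - z • x‖ := norm_sub_norm_le _ _

lemma nn_opl_eq_zero_of_isometry {T : E →L[ℂ] E} (hT : ∀ x, ‖T x‖ = ‖x‖) {z : ℂ}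
    (hz : ‖z‖ < 1) : nn (opl T z) = 0 := by
  rw [nn, LinearMap.ker_eq_bot.2 (antilipschitz_opl_of_isometry hT hz).injective]
  exact rank_bot ℂ E

lemma usf_opl_of_isometry [CompleteSpace E] {T : E →L[ℂ] E} (hT : ∀ x, ‖T x‖ = ‖x‖) {z : ℂ}
    (hz : ‖z‖ < 1) : USF (opl T z) := by
  refine ⟨?_, by rw [nn_opl_eq_zero_of_isometry hT hz]; exact aleph0_pos⟩
  rw [LinearMap.coe_range]
  exact (antilipschitz_opl_of_isometry hT hz).isClosed_range (opl T z).uniformContinuous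

lemma nn_opl_adjoint_le_dd [CompleteSpace E] (T : E →L[ℂ] E) (z : ℂ) :
    nn (opl (adjoint T) (starRingEnd ℂ z)) ≤ dd (opl T z) := by
  rw [nn, dd, ← adjoint_opl]
  refine rank_le_rank_quotient_of_disjoint ?_
  rw [← orthogonal_range]
  exact (Submodule.orthogonal_disjoint _).symm

lemma nn_opl_eq_nn_of_mul_eq_one [CompleteSpace E] {A B : E →L[ℂ] E} (hBA : B * A = 1)
    (hA : ‖A‖ ≤ 1) {μ : ℂ} (hμ : ‖μ‖ < 1) : nn (opl B μ) = nn B := by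
  have hμA : ‖μ • A‖ < 1 :=
    (norm_smul_le μ A).trans_lt (by nlinarith [norm_nonneg μ, norm_nonneg A])
  let U := ContinuousLinearEquiv.unitsEquiv ℂ E (Units.oneSub (μ • A) hμA)
  have hfactor : opl B μ = B ∘L (U : E →L[ℂ] E) := by
    ext x
    have hBAx : B (A x) = x := by rw [← mul_apply_eq_comp, hBA, one_apply_eq_self]
    simp [U, opl, hBAx]
  rw [nn, nn, hfactor]
  change Module.rank ℂ (LinearMap.ker ((B : E →ₗ[ℂ] E) ∘ₗ (U.toLinearEquiv : E →ₗ[ℂ] E))) = _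
  rw [LinearMap.ker_comp, Submodule.comap_equiv_eq_map_symm, LinearEquiv.rank_map_eq]

end Hilbert

section Interleave

variable {A B : ℓ2 →L[ℂ] ℓ2}

lemma mul_eq_one_of_apply_odd
    (hAodd : ∀ (x : ℓ2) (n : ℕ), (A x : ∀ _ : ℕ, ℂ) (2 * n + 1) = (x : ∀ _ : ℕ, ℂ) n)
    (hB : ∀ (x : ℓ2) (n : ℕ), (B x : ∀ _ : ℕ, ℂ) n = (x : ∀ _ : ℕ, ℂ) (2 * n + 1)) :
    B * A = 1 := by
  ext x n
  simp [mul_apply_eq_comp, hB, hAodd]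

lemma eq_adjoint_of_apply_even_odd
    (hAeven : ∀ (x : ℓ2) (n : ℕ), (A x : ∀ _ : ℕ, ℂ) (2 * n) = 0)
    (hAodd : ∀ (x : ℓ2) (n : ℕ), (A x : ∀ _ : ℕ, ℂ) (2 * n + 1) = (x : ∀ _ : ℕ, ℂ) n)
    (hB : ∀ (x : ℓ2) (n : ℕ), (B x : ∀ _ : ℕ, ℂ) n = (x : ∀ _ : ℕ, ℂ) (2 * n + 1)) :
    B = adjoint A := by
  refine (eq_adjoint_iff B A).2 fun x y => ?_
  have heven : ∀ k, inner ℂ (x (2 * k)) (A y (2 * k)) = 0 := fun k => by simp [hAeven]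
  have hodd : ∀ k, inner ℂ (x (2 * k + 1)) (A y (2 * k + 1)) = inner ℂ (B x k) (y k) :=
    fun k => by rw [hAodd, hB]
  rw [lp.inner_eq_tsum, lp.inner_eq_tsum,
    ← tsum_even_add_odd (f := fun n => inner ℂ (x n) (A y n))
    (summable_zero.congr fun k => (heven k).symm)
    ((lp.summable_inner (B x) y).congr fun k => (hodd k).symm),
    tsum_congr heven, tsum_congr hodd, tsum_zero, zero_add]

lemma aleph0_le_nn_of_apply_odd
    (hB : ∀ (x : ℓ2) (n : ℕ), (B x : ∀ _ : ℕ, ℂ) n = (x : ∀ _ : ℕ, ℂ) (2 * n + 1)) :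
    ℵ₀ ≤ nn B := by
  let e : ℕ → ℓ2 := fun k => lp.single 2 (2 * k) 1
  have he : Orthonormal ℂ e := by
    rw [orthonormal_iff_ite]
    intro i j
    simp [e, lp.inner_single_left, Pi.single_apply]
  have hker : ∀ k, e k ∈ LinearMap.ker (B : ℓ2 →ₗ[ℂ] ℓ2) := fun k => by
    ext n
    simp [e, hB, show 2 * n + 1 ≠ 2 * k by omega]
  refine LinearIndependent.aleph0_le_rank (v := fun k => (⟨e k, hker k⟩ : LinearMap.ker _)) ?_
  exact LinearIndependent.of_comp (LinearMap.ker _).subtype he.linearIndependent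

end Interleave

theorem Omega_contains_open_unit_disc
    (A B : ℓ2 →L[ℂ] ℓ2)
    (hAeven : ∀ (x : ℓ2) (n : ℕ), (A x : ∀ _ : ℕ, ℂ) (2 * n) = 0)
    (hAodd : ∀ (x : ℓ2) (n : ℕ), (A x : ∀ _ : ℕ, ℂ) (2 * n + 1) = (x : ∀ _ : ℕ, ℂ) n)
    (hB : ∀ (x : ℓ2) (n : ℕ), (B x : ∀ _ : ℕ, ℂ) n = (x : ∀ _ : ℕ, ℂ) (2 * n + 1)) :
    (∀ z : ℂ, ‖z‖ < 1 →
      USF (opl A z) ∧ nn (opl A z) = 0 ∧ Cardinal.aleph0 ≤ dd (opl A z) ∧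
        0 < nn (opl B z)) ∧
      {z : ℂ | ‖z‖ < 1} ⊆ Omega A B := by
  have hBA : B * A = 1 := mul_eq_one_of_apply_odd hAodd hB
  have hadj : B = adjoint A := eq_adjoint_of_apply_even_odd hAeven hAodd hB
  have hA : ∀ x, ‖A x‖ = ‖x‖ := A.norm_map_iff_adjoint_comp_self.2 (hadj ▸ hBA)
  have hnnB : ∀ μ : ℂ, ‖μ‖ < 1 → ℵ₀ ≤ nn (opl B μ) := fun μ hμ => by
    rw [nn_opl_eq_nn_of_mul_eq_one hBA (A.opNorm_le_bound zero_le_one fun x => by simp [hA]) hμ]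
    exact aleph0_le_nn_of_apply_odd hB
  have hdisc : ∀ z : ℂ, ‖z‖ < 1 →
      USF (opl A z) ∧ nn (opl A z) = 0 ∧ ℵ₀ ≤ dd (opl A z) ∧ 0 < nn (opl B z) := by
    intro z hz
    have hdd : ℵ₀ ≤ dd (opl A z) :=
      (hnnB _ (by simpa using hz)).trans (hadj ▸ nn_opl_adjoint_le_dd A z)
    exact ⟨usf_opl_of_isometry hA hz, nn_opl_eq_zero_of_isometry hA hz, hdd,
      aleph0_pos.trans_le (hnnB z hz)⟩
  refine ⟨hdisc, fun z hz => ?_⟩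
  obtain ⟨hUSF, hnnA, hdd, hnnBz⟩ := hdisc z hz
  exact ⟨hUSF, hdd, by rw [hnnA, zero_add]; exact hnnBz⟩

end UWE
end
end
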